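/- arXiv:1808.08853 — 2 statements merged into one kernel-verified Lean document; each statement's English description precedes it below -/
import Mathlib

section
/- Let X, Y ≥ 0 and let constants A₁, A₂, B₁, B₂ > 0, exponents a₁, b₂ < 0 < a₂, b₁ with p₁ − 1 − a₁ − a₂ > 0 and p₂ − 1 − b₁ − b₂ > 0 (p₁, p₂ > 1), satisfy the coupled inequalities X^{p₁−1−a₁} ≤ A₁ + B₁ Y^{b₁} and Y^{p₂−1−b₂} ≤ A₂ + B₂ X^{a₂}. Then there exists a constant ρ, depending only on A₁, A₂, B₁, B₂ and the exponents, such that max{X, Y} ≤ ρ. -/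
open Real

theorem stmt_13 (p₁ p₂ a₁ a₂ b₁ b₂ A₁ A₂ B₁ B₂ : ℝ)
    (hp₁ : 1 < p₁) (hp₂ : 1 < p₂)
    (ha₁ : a₁ < 0) (hb₂ : b₂ < 0) (ha₂ : 0 < a₂) (hb₁ : 0 < b₁)
    (hsub₁ : a₁ + a₂ < p₁ - 1) (hsub₂ : b₁ + b₂ < p₂ - 1)
    (hA₁ : 0 < A₁) (hA₂ : 0 < A₂) (hB₁ : 0 < B₁) (hB₂ : 0 < B₂) :
    ∃ ρ : ℝ, 0 < ρ ∧ ∀ X Y : ℝ, 0 ≤ X → 0 ≤ Y →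
      X ^ (p₁ - 1 - a₁) ≤ A₁ + B₁ * Y ^ b₁ →
      Y ^ (p₂ - 1 - b₂) ≤ A₂ + B₂ * X ^ a₂ →
      max X Y ≤ ρ := by
  set α := p₁ - 1 - a₁ with hαdef
  set β := p₂ - 1 - b₂ with hβdef
  have hα : 0 < α := by simp only [hαdef]; linarith
  have hβ : 0 < β := by simp only [hβdef]; linarith
  have ha₂α : a₂ < α := by simp only [hαdef]; linarith
  have hb₁β : b₁ < β := by simp only [hβdef]; linarith
  set γ := a₂ * b₁ / β with hγdef
  have hγ : 0 < γ := div_pos (mul_pos ha₂ hb₁) hβ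
  have hγα : γ < α := by
    rw [hγdef, div_lt_iff₀ hβ]; nlinarith
  set C₁ := (A₂ + B₂) ^ (b₁ / β) with hC₁def
  have hC₁ : 0 < C₁ := rpow_pos_of_pos (by linarith) _
  set K := 1 + A₁ + B₁ * C₁ with hKdef
  have hK : 1 < K := by nlinarith
  set ρX := K ^ (α - γ)⁻¹ with hρXdef
  have hρX : 0 < ρX := rpow_pos_of_pos (by linarith) _
  refine ⟨max ρX ((A₂ + B₂) ^ β⁻¹ * ρX ^ (a₂ / β)), lt_max_of_lt_left hρX, ?_⟩
  intro X Y hX hY h1 h2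
  set M := max X 1 with hMdef
  have hM1 : 1 ≤ M := le_max_right _ _
  have hM0 : (0:ℝ) < M := lt_of_lt_of_le one_pos hM1
  have hXM : X ≤ M := le_max_left _ _
  have hAB : (0:ℝ) < A₂ + B₂ := by linarith
  have hMone : ∀ t : ℝ, 0 ≤ t → 1 ≤ M ^ t := by
    intro t ht
    calc (1:ℝ) = 1 ^ t := (one_rpow t).symm
    _ ≤ M ^ t := rpow_le_rpow zero_le_one hM1 ht
  have hXa : X ^ a₂ ≤ M ^ a₂ := rpow_le_rpow hX hXM ha₂.le
  have hYβ : Y ^ β ≤ (A₂ + B₂) * M ^ a₂ := by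
    have h1M : 1 ≤ M ^ a₂ := hMone a₂ ha₂.le
    nlinarith
  have hY' : Y ≤ (A₂ + B₂) ^ β⁻¹ * M ^ (a₂ / β) := by
    rw [div_eq_mul_inv]
    have := rpow_le_rpow (rpow_nonneg hY β) hYβ (inv_nonneg.2 hβ.le)
    rwa [Real.rpow_rpow_inv hY hβ.ne', Real.mul_rpow hAB.le (rpow_nonneg hM0.le _),
      ← Real.rpow_mul hM0.le] at this
  have hYb : Y ^ b₁ ≤ C₁ * M ^ γ := by
    have := rpow_le_rpow hY hY' hb₁.le
    rwa [Real.mul_rpow (rpow_nonneg hAB.le _) (rpow_nonneg hM0.le _),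
      ← Real.rpow_mul hAB.le, ← Real.rpow_mul hM0.le,
      show β⁻¹ * b₁ = b₁ / β by ring, show a₂ / β * b₁ = γ by rw [hγdef]; ring] at this
  have hMγ : 1 ≤ M ^ γ := hMone γ hγ.le
  have hMK : M ^ α ≤ K * M ^ γ := by
    rcases le_total 1 X with hx1 | hx1
    · have hMX : M = X := max_eq_left hx1
      have hYb' : Y ^ b₁ ≤ C₁ * X ^ γ := by rwa [hMX] at hYb
      have hMγ' : 1 ≤ X ^ γ := by rw [← hMX]; exact hMγ
      have hBb : B₁ * Y ^ b₁ ≤ B₁ * (C₁ * X ^ γ) :=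
        mul_le_mul_of_nonneg_left hYb' hB₁.le
      have hAa : A₁ * 1 ≤ A₁ * X ^ γ := mul_le_mul_of_nonneg_left hMγ' hA₁.le
      have hKX : K * X ^ γ = X ^ γ + A₁ * X ^ γ + B₁ * C₁ * X ^ γ := by
        rw [hKdef]; ring
      rw [hMX]
      linarith
    · have hMX : M = 1 := max_eq_right hx1
      rw [hMX, Real.one_rpow, Real.one_rpow, mul_one]
      linarith
  have hMsub : M ^ (α - γ) ≤ K := by
    rw [Real.rpow_sub hM0, div_le_iff₀ (rpow_pos_of_pos hM0 γ)]
    exact hMK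
  have hMρ : M ≤ ρX := by
    have := rpow_le_rpow (rpow_nonneg hM0.le _) hMsub (inv_nonneg.2 (by linarith : (0:ℝ) ≤ α - γ))
    rwa [Real.rpow_rpow_inv hM0.le (by linarith : α - γ ≠ 0)] at this
  refine max_le (le_max_of_le_left (hXM.trans hMρ)) (le_max_of_le_right ?_)
  have : M ^ (a₂ / β) ≤ ρX ^ (a₂ / β) :=
    rpow_le_rpow hM0.le hMρ (div_pos ha₂ hβ).le
  calc Y ≤ (A₂ + B₂) ^ β⁻¹ * M ^ (a₂ / β) := hY'
  _ ≤ (A₂ + B₂) ^ β⁻¹ * ρX ^ (a₂ / β) := by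
      exact mul_le_mul_of_nonneg_left this (rpow_nonneg hAB.le _)
end

section
/- Let C₃, C₄ ≥ 1, ρ ≥ 0, β > 0, and let (κ_n) be positive reals with Σ_{n} 1/((κ_n+1)p) < ∞ and Σ_n 1/√(κ_n+1) < ∞ (p > 1). If a sequence of nonnegative reals (a_n) with a₀ ≤ 1 satisfies a_n ≤ C₃^{η_n} σ_n (1 + ρ^{β})^{η_n} a_{n−1}^{θ_n} with η_n = 1/((κ_n+1)p), θ_n = (κ_n p + 1)/((κ_n+1)p) ∈ (0,1], and σ_n ≤ C₄^{1/√(κ_n+1)}, then sup_n a_n ≤ C₃^{S} C₄^{T} (1+ρ^β)^{S} where S = Σ η_n and T = Σ 1/√(κ_n+1); in particular (a_n) is bounded. -/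
open Real

theorem stmt_19 (C₃ C₄ ρ β p : ℝ)
    (hC₃ : 1 ≤ C₃) (hC₄ : 1 ≤ C₄) (hρ : 0 ≤ ρ) (hβ : 0 < β) (hp : 1 < p)
    (κ : ℕ → ℝ) (hκ : ∀ n, 0 < κ n)
    (hsum₁ : Summable (fun n => 1 / ((κ n + 1) * p)))
    (hsum₂ : Summable (fun n => 1 / Real.sqrt (κ n + 1)))
    (σ : ℕ → ℝ) (hσ : ∀ n, σ n ≤ C₄ ^ (1 / Real.sqrt (κ n + 1)))
    (a : ℕ → ℝ) (ha : ∀ n, 0 ≤ a n) (ha₀ : a 0 ≤ 1)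
    (hrec : ∀ n : ℕ, a (n + 1) ≤
      C₃ ^ (1 / ((κ (n + 1) + 1) * p)) * σ (n + 1) *
        (1 + ρ ^ β) ^ (1 / ((κ (n + 1) + 1) * p)) *
        a n ^ ((κ (n + 1) * p + 1) / ((κ (n + 1) + 1) * p))) :
    ∀ n, a n ≤
      C₃ ^ (∑' n, 1 / ((κ n + 1) * p)) *
        C₄ ^ (∑' n, 1 / Real.sqrt (κ n + 1)) *
        (1 + ρ ^ β) ^ (∑' n, 1 / ((κ n + 1) * p)) := by
  have hC₃0 : (0:ℝ) < C₃ := lt_of_lt_of_le one_pos hC₃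
  have hC₄0 : (0:ℝ) < C₄ := lt_of_lt_of_le one_pos hC₄
  have hρβ : 0 ≤ ρ ^ β := Real.rpow_nonneg hρ β
  have hD1 : 1 ≤ 1 + ρ ^ β := le_add_of_nonneg_right hρβ
  have hD0 : (0:ℝ) < 1 + ρ ^ β := lt_of_lt_of_le one_pos hD1
  have hp0 : (0:ℝ) < p := lt_trans one_pos hp
  have hηpos : ∀ n, 0 < 1 / ((κ n + 1) * p) := fun n =>
    div_pos one_pos (mul_pos (by linarith [hκ n]) hp0)
  have hτpos : ∀ n, 0 < 1 / Real.sqrt (κ n + 1) := fun n =>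
    div_pos one_pos (Real.sqrt_pos.2 (by linarith [hκ n]))
  set S : ℕ → ℝ := fun n => ∑ k ∈ Finset.range (n + 1), 1 / ((κ k + 1) * p) with hS
  set T : ℕ → ℝ := fun n => ∑ k ∈ Finset.range (n + 1), 1 / Real.sqrt (κ k + 1) with hT
  have hSnn : ∀ n, 0 ≤ S n := fun n =>
    Finset.sum_nonneg fun k _ => le_of_lt (hηpos k)
  have hTnn : ∀ n, 0 ≤ T n := fun n =>
    Finset.sum_nonneg fun k _ => le_of_lt (hτpos k)
  have hB1 : ∀ n, 1 ≤ C₃ ^ S n * C₄ ^ T n * (1 + ρ ^ β) ^ S n := by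
    intro n
    have h1 := Real.one_le_rpow hC₃ (hSnn n)
    have h2 := Real.one_le_rpow hC₄ (hTnn n)
    have h3 := Real.one_le_rpow hD1 (hSnn n)
    calc (1:ℝ) = 1 * 1 * 1 := by ring
      _ ≤ C₃ ^ S n * C₄ ^ T n * (1 + ρ ^ β) ^ S n :=
        mul_le_mul (mul_le_mul h1 h2 zero_le_one (by positivity)) h3 zero_le_one
          (by positivity)
  have key : ∀ n, a n ≤ C₃ ^ S n * C₄ ^ T n * (1 + ρ ^ β) ^ S n := by
    intro n
    induction n with
    | zero => exact le_trans ha₀ (hB1 0)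
    | succ n ih =>
      set B := C₃ ^ S n * C₄ ^ T n * (1 + ρ ^ β) ^ S n with hBdef
      have hB : 1 ≤ B := hB1 n
      set θ := (κ (n + 1) * p + 1) / ((κ (n + 1) + 1) * p) with hθdef
      have hθpos : 0 < θ :=
        div_pos (by nlinarith [hκ (n+1)]) (mul_pos (by linarith [hκ (n+1)]) hp0)
      have hθle : θ ≤ 1 := by
        rw [hθdef, div_le_one (mul_pos (by linarith [hκ (n+1)]) hp0)]
        nlinarith [hκ (n+1)]
      have haθ : a n ^ θ ≤ B := by
        rcases le_or_gt (a n) 1 with h | h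
        · exact le_trans (Real.rpow_le_one (ha n) h (le_of_lt hθpos)) hB
        · calc a n ^ θ ≤ a n ^ (1:ℝ) :=
                Real.rpow_le_rpow_of_exponent_le (le_of_lt h) hθle
            _ = a n := Real.rpow_one _
            _ ≤ B := ih
      have hη := hηpos (n + 1)
      have hτ := hτpos (n + 1)
      have hC₃η : 0 < C₃ ^ (1 / ((κ (n + 1) + 1) * p)) := Real.rpow_pos_of_pos hC₃0 _
      have hDη : 0 < (1 + ρ ^ β) ^ (1 / ((κ (n + 1) + 1) * p)) := Real.rpow_pos_of_pos hD0 _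
      have hstep : a (n + 1) ≤
          C₃ ^ (1 / ((κ (n + 1) + 1) * p)) * C₄ ^ (1 / Real.sqrt (κ (n + 1) + 1)) *
            (1 + ρ ^ β) ^ (1 / ((κ (n + 1) + 1) * p)) * B := by
        refine le_trans (hrec n) ?_
        have haθ0 : 0 ≤ a n ^ θ := Real.rpow_nonneg (ha n) _
        have hσ' := hσ (n + 1)
        calc C₃ ^ (1 / ((κ (n + 1) + 1) * p)) * σ (n + 1) *
              (1 + ρ ^ β) ^ (1 / ((κ (n + 1) + 1) * p)) * a n ^ θ
            ≤ C₃ ^ (1 / ((κ (n + 1) + 1) * p)) * C₄ ^ (1 / Real.sqrt (κ (n + 1) + 1)) *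
              (1 + ρ ^ β) ^ (1 / ((κ (n + 1) + 1) * p)) * a n ^ θ := by
              apply mul_le_mul_of_nonneg_right _ haθ0
              apply mul_le_mul_of_nonneg_right _ hDη.le
              exact mul_le_mul_of_nonneg_left hσ' hC₃η.le
          _ ≤ C₃ ^ (1 / ((κ (n + 1) + 1) * p)) * C₄ ^ (1 / Real.sqrt (κ (n + 1) + 1)) *
              (1 + ρ ^ β) ^ (1 / ((κ (n + 1) + 1) * p)) * B := by
              apply mul_le_mul_of_nonneg_left haθ
              positivity
      refine le_trans hstep (le_of_eq ?_)
      have hSsucc : S (n + 1) = S n + 1 / ((κ (n + 1) + 1) * p) := by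
        simp [hS, Finset.sum_range_succ]
      have hTsucc : T (n + 1) = T n + 1 / Real.sqrt (κ (n + 1) + 1) := by
        simp [hT, Finset.sum_range_succ]
      rw [hSsucc, hTsucc, Real.rpow_add hC₃0, Real.rpow_add hC₄0, Real.rpow_add hD0]
      ring
  intro n
  refine le_trans (key n) ?_
  have hSle : S n ≤ ∑' k, 1 / ((κ k + 1) * p) :=
    Summable.sum_le_tsum _ (fun k _ => le_of_lt (hηpos k)) hsum₁
  have hTle : T n ≤ ∑' k, 1 / Real.sqrt (κ k + 1) :=
    Summable.sum_le_tsum _ (fun k _ => le_of_lt (hτpos k)) hsum₂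
  have h1 : C₃ ^ S n ≤ C₃ ^ (∑' k, 1 / ((κ k + 1) * p)) :=
    Real.rpow_le_rpow_of_exponent_le hC₃ hSle
  have h2 : C₄ ^ T n ≤ C₄ ^ (∑' k, 1 / Real.sqrt (κ k + 1)) :=
    Real.rpow_le_rpow_of_exponent_le hC₄ hTle
  have h3 : (1 + ρ ^ β) ^ S n ≤ (1 + ρ ^ β) ^ (∑' k, 1 / ((κ k + 1) * p)) :=
    Real.rpow_le_rpow_of_exponent_le hD1 hSle
  have p1 : 0 < C₃ ^ S n := Real.rpow_pos_of_pos hC₃0 _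
  have p2 : 0 < C₄ ^ T n := Real.rpow_pos_of_pos hC₄0 _
  have p3 : 0 < (1 + ρ ^ β) ^ S n := Real.rpow_pos_of_pos hD0 _
  exact mul_le_mul (mul_le_mul h1 h2 p2.le (by positivity)) h3 p3.le (by positivity)
end
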